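/- arXiv:2202.12234 — 4 statements merged into one kernel-verified Lean document; each statement's English description precedes it below -/
import Mathlib

section
/- Fisher consistency of the pointwise PDI risk: with r(b) = ∫_{a_L}^{b}(1−α)h(a)da + ∫_{b}^{a_U} α(1−h(a))da where h is continuous, h(a_L) ≤ α ≤ h(a_U), and a* is the unique solution of h(a) = α in [a_L, a_U], the point a* is the unique global minimizer of r on [a_L, a_U]. -/
open Set intervalIntegral

/-
Writing r b - r a* as a single integral, the two pieces combine to
∫_{a*}^{b} ((1 - α) h - α (1 - h)) = ∫_{a*}^{b} (h - α).
By the intermediate value theorem and uniqueness of the root, h - α is negative to the left of a*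
and positive to its right, so this integral is positive for every b ≠ a*.
-/

theorem integral_add_integral_sub_integral_add_integral {f g : ℝ → ℝ} {a u b c : ℝ}
    (hf : IntervalIntegrable f MeasureTheory.volume a u)
    (hg : IntervalIntegrable g MeasureTheory.volume a u)
    (hb : b ∈ Icc a u) (hc : c ∈ Icc a u) :
    ((∫ x in a..b, f x) + ∫ x in b..u, g x) - ((∫ x in a..c, f x) + ∫ x in c..u, g x) =
      ∫ x in c..b, (f x - g x) := by
  have sub_uIcc : ∀ {x y}, x ∈ Icc a u → y ∈ Icc a u → uIcc x y ⊆ uIcc a u := fun hx hy =>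
    uIcc_subset_uIcc (Icc_subset_uIcc hx) (Icc_subset_uIcc hy)
  have ha : a ∈ Icc a u := left_mem_Icc.2 (hb.1.trans hb.2)
  have hu : u ∈ Icc a u := right_mem_Icc.2 (hb.1.trans hb.2)
  have hfab := hf.mono_set (sub_uIcc ha hb)
  have hfac := hf.mono_set (sub_uIcc ha hc)
  have hgub := hg.mono_set (sub_uIcc hu hb)
  have hguc := hg.mono_set (sub_uIcc hu hc)
  rw [integral_sub (hf.mono_set (sub_uIcc hc hb)) (hg.mono_set (sub_uIcc hc hb)),
    ← integral_interval_sub_left hfab hfac, ← integral_interval_sub_left hgub hguc,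
    integral_symm b u, integral_symm c u]
  ring

theorem ContinuousOn.lt_of_lt_of_unique_eq {h : ℝ → ℝ} {s t c α : ℝ}
    (hcont : ContinuousOn h (Icc s t)) (hs : h s ≤ α) (huniq : ∀ a ∈ Icc s t, h a = α → a = c)
    {a : ℝ} (ha : a ∈ Icc s t) (hac : a < c) : h a < α := by
  by_contra! hle
  obtain ⟨d, hd, hda⟩ := intermediate_value_Icc ha.1
    (hcont.mono (Icc_subset_Icc_right ha.2)) ⟨hs, hle⟩
  have : d = c := huniq d (Icc_subset_Icc_right ha.2 hd) hda
  exact (hac.trans_le (this ▸ hd.2)).false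

theorem ContinuousOn.lt_of_gt_of_unique_eq {h : ℝ → ℝ} {s t c α : ℝ}
    (hcont : ContinuousOn h (Icc s t)) (ht : α ≤ h t) (huniq : ∀ a ∈ Icc s t, h a = α → a = c)
    {a : ℝ} (ha : a ∈ Icc s t) (hca : c < a) : α < h a := by
  by_contra! hle
  obtain ⟨d, hd, hda⟩ := intermediate_value_Icc ha.2
    (hcont.mono (Icc_subset_Icc_left ha.1)) ⟨hle, ht⟩
  have : d = c := huniq d (Icc_subset_Icc_left ha.1 hd) hda
  exact (hca.trans_le (this ▸ hd.1)).false

theorem integral_pos_of_neg_left_of_pos_right {f : ℝ → ℝ} {c b : ℝ}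
    (hf : ContinuousOn f (uIcc c b)) (hneg : ∀ x ∈ Ioo b c, f x < 0)
    (hpos : ∀ x ∈ Ioo c b, 0 < f x) (hbc : b ≠ c) : 0 < ∫ x in c..b, f x := by
  rcases hbc.lt_or_gt with hbc | hcb
  · rw [integral_symm, ← integral_neg]
    exact intervalIntegral_pos_of_pos_on (hf.neg.intervalIntegrable.symm)
      (fun x hx => neg_pos.2 (hneg x hx)) hbc
  · exact intervalIntegral_pos_of_pos_on hf.intervalIntegrable hpos hcb

theorem pointwise_fisher_consistency_general (aL aU α : ℝ) (h : ℝ → ℝ)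
    (hcont : ContinuousOn h (Icc aL aU))
    (hL : h aL ≤ α) (hU : α ≤ h aU)
    (astar : ℝ) (hstar : astar ∈ Icc aL aU)
    (huniq : ∀ a ∈ Icc aL aU, h a = α → a = astar)
    (r : ℝ → ℝ)
    (hr : ∀ b ∈ Icc aL aU,
      r b = (∫ a in aL..b, (1 - α) * h a) + ∫ a in b..aU, α * (1 - h a)) :
    (∀ b ∈ Icc aL aU, r astar ≤ r b) ∧
    (∀ b ∈ Icc aL aU, r b = r astar → b = astar) := by
  have hint : ∀ φ : ℝ → ℝ, ContinuousOn φ (Icc aL aU) →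
      IntervalIntegrable φ MeasureTheory.volume aL aU := fun φ hφ =>
    hφ.intervalIntegrable_of_Icc (hstar.1.trans hstar.2)
  have hdiff : ∀ b ∈ Icc aL aU, r b - r astar = ∫ a in astar..b, (h a - α) := fun b hb => by
    rw [hr b hb, hr astar hstar, integral_add_integral_sub_integral_add_integral
      (f := fun a => (1 - α) * h a) (g := fun a => α * (1 - h a))
      (hint _ (continuousOn_const.mul hcont))
      (hint _ (continuousOn_const.mul (continuousOn_const.sub hcont))) hb hstar]
    congr 1 with a
    ring
  have hpos : ∀ b ∈ Icc aL aU, b ≠ astar → 0 < r b - r astar := fun b hb hne => by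
    rw [hdiff b hb]
    refine integral_pos_of_neg_left_of_pos_right
      ((hcont.sub continuousOn_const).mono (uIcc_subset_Icc hstar hb)) (fun x hx => ?_)
      (fun x hx => ?_) hne
    · have hx' : x ∈ Icc aL aU := ⟨hb.1.trans hx.1.le, hx.2.le.trans hstar.2⟩
      exact sub_neg.2 (hcont.lt_of_lt_of_unique_eq hL huniq hx' hx.2)
    · have hx' : x ∈ Icc aL aU := ⟨hstar.1.trans hx.1.le, hx.2.le.trans hb.2⟩
      exact sub_pos.2 (hcont.lt_of_gt_of_unique_eq hU huniq hx' hx.1)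
  refine ⟨fun b hb => ?_, fun b hb hrb => ?_⟩
  · rcases eq_or_ne b astar with rfl | hne
    · exact le_rfl
    · linarith [hpos b hb hne]
  · by_contra hne
    linarith [hpos b hb hne]

theorem pointwise_fisher_consistency (aL aU α : ℝ) (h : ℝ → ℝ) (hlt : aL < aU)
    (hα : α ∈ Ioo (0 : ℝ) 1)
    (hcont : ContinuousOn h (Icc aL aU))
    (hrange : ∀ a ∈ Icc aL aU, h a ∈ Icc (0 : ℝ) 1)
    (hL : h aL ≤ α) (hU : α ≤ h aU)
    (astar : ℝ) (hstar : astar ∈ Icc aL aU) (heq : h astar = α)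
    (huniq : ∀ a ∈ Icc aL aU, h a = α → a = astar)
    (r : ℝ → ℝ)
    (hr : ∀ b ∈ Icc aL aU,
      r b = (∫ a in aL..b, (1 - α) * h a) + ∫ a in b..aU, α * (1 - h a)) :
    (∀ b ∈ Icc aL aU, r astar ≤ r b) ∧
    (∀ b ∈ Icc aL aU, r b = r astar → b = astar) :=
  pointwise_fisher_consistency_general aL aU α h hcont hL hU astar hstar huniq r hr
end

section
/- Surrogate approximation bound (pointwise version): let h: ℝ → [0,1] be measurable and for b ∈ ℝ, ε > 0 define r(b) = ∫_{a_L}^{b}(1−α)h(a)da + ∫_{b}^{a_U}α(1−h(a))da and r_ε(b) = ∫_{a_L}^{a_U} [(1−α)h(a)Ψ_ε(b,a) + α(1−h(a))Ψ_ε(a,b)] da with Ψ_ε(x,y)=min(ε⁻¹·max(x−y,0),1). Then |r(b) − r_ε(b)| ≤ ε for all b ∈ [a_L + ε, a_U − ε]. -/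
/-!
Split `r_ε(b)` at `b`: left of `b` the term `Ψ_ε(a, b)` vanishes and right of `b` the term
`Ψ_ε(b, a)` does, so `r(b) - r_ε(b)` is `∫_{a_L}^b (1 - α) h (1 - Ψ_ε(b, ·))` plus
`∫_b^{a_U} α (1 - h) (1 - Ψ_ε(·, b))`. Both integrands are nonnegative and vanish at distance
at least `ε` from `b`, so the two integrals lie in `[0, (1 - α) ε]` and `[0, α ε]`.
-/

open Set intervalIntegral

noncomputable def Psi (ε x y : ℝ) : ℝ := min (ε⁻¹ * max (x - y) 0) 1

open MeasureTheory
open scoped Interval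

section Psi

variable {ε x y : ℝ}

lemma Psi_of_le (h : x ≤ y) : Psi ε x y = 0 := by
  simp [Psi, max_eq_right (sub_nonpos.2 h)]

lemma Psi_of_add_le (hε : 0 < ε) (h : y + ε ≤ x) : Psi ε x y = 1 := by
  refine min_eq_right ?_
  rw [max_eq_left (by linarith), le_inv_mul_iff₀ hε]
  linarith

@[fun_prop]
lemma Continuous.Psi {X : Type*} [TopologicalSpace X] {f g : X → ℝ} (hf : Continuous f)
    (hg : Continuous g) : Continuous fun p => Psi ε (f p) (g p) := by
  unfold _root_.Psi
  fun_prop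

lemma one_sub_Psi_mem_Icc (hε : 0 ≤ ε) (x y : ℝ) : 1 - Psi ε x y ∈ Icc 0 1 :=
  ⟨sub_nonneg.2 (min_le_right _ _),
    sub_le_self _ (le_min (mul_nonneg (inv_nonneg.2 hε) (le_max_right _ _)) zero_le_one)⟩

end Psi

lemma mul_mem_Icc_of_mem_Icc_zero_one {u x M : ℝ} (hu : u ∈ Icc 0 M) (hx : x ∈ Icc 0 1) :
    u * x ∈ Icc 0 M :=
  ⟨mul_nonneg hu.1 hx.1, (mul_le_of_le_one_right hu.1 hx.2).trans hu.2⟩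

lemma intervalIntegrable_of_norm_le {E : Type*} [NormedAddCommGroup E] {f : ℝ → E} {a b C : ℝ}
    (hf : AEStronglyMeasurable f volume) (hC : ∀ x ∈ Ι a b, ‖f x‖ ≤ C) :
    IntervalIntegrable f volume a b :=
  intervalIntegrable_iff.2 <| IntegrableOn.of_bound measure_Ioc_lt_top hf.restrict C
    (ae_restrict_of_forall_mem measurableSet_uIoc hC)

lemma integral_mem_Icc_of_eq_zero_off {g : ℝ → ℝ} {c s t d M : ℝ}
    (hcs : c ≤ s) (hst : s ≤ t) (htd : t ≤ d)
    (h_left : ∀ a ∈ Ioc c s, g a = 0) (h_right : ∀ a ∈ Ioc t d, g a = 0)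
    (h_mid : ∀ a ∈ Icc s t, g a ∈ Icc 0 M) :
    ∫ a in c..d, g a ∈ Icc 0 (M * (t - s)) := by
  have hM : 0 ≤ M := (h_mid s ⟨le_rfl, hst⟩).1.trans (h_mid s ⟨le_rfl, hst⟩).2
  by_cases hg : IntervalIntegrable g volume c d
  swap
  · rw [intervalIntegral.integral_undef hg]
    exact ⟨le_rfl, mul_nonneg hM (sub_nonneg.2 hst)⟩
  have hsub : ∀ {x y}, x ∈ Icc c d → y ∈ Icc c d → IntervalIntegrable g volume x y :=
    fun hx hy => hg.mono_set (uIcc_subset_uIcc (Icc_subset_uIcc hx) (Icc_subset_uIcc hy))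
  have hc : c ∈ Icc c d := ⟨le_rfl, by linarith⟩
  have hs : s ∈ Icc c d := ⟨hcs, by linarith⟩
  have ht : t ∈ Icc c d := ⟨by linarith, htd⟩
  have hd : d ∈ Icc c d := ⟨by linarith, le_rfl⟩
  have h_split : ∫ a in c..d, g a = ∫ a in s..t, g a := by
    rw [← integral_add_adjacent_intervals (hsub hc hs) (hsub hs hd),
      ← integral_add_adjacent_intervals (hsub hs ht) (hsub ht hd),
      integral_zero_ae (ae_of_all _ fun a ha => h_left a (uIoc_of_le hcs ▸ ha)),
      integral_zero_ae (ae_of_all _ fun a ha => h_right a (uIoc_of_le htd ▸ ha))]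
    ring
  rw [h_split]
  refine ⟨integral_nonneg hst fun a ha => (h_mid a ha).1, ?_⟩
  have h_norm : ∀ a ∈ Ι s t, ‖g a‖ ≤ M := fun a ha => by
    have ha' := h_mid a (Ioc_subset_Icc_self (uIoc_of_le hst ▸ ha))
    exact (Real.norm_of_nonneg ha'.1).trans_le ha'.2
  simpa [abs_of_nonneg (sub_nonneg.2 hst)] using
    (le_abs_self _).trans (norm_integral_le_of_norm_le_const h_norm)

lemma integral_sub_integral_Psi {u v : ℝ → ℝ} {aL aU b ε : ℝ} (hb : b ∈ Icc aL aU)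
    (hu : IntervalIntegrable u volume aL aU) (hv : IntervalIntegrable v volume aL aU) :
    (∫ a in aL..b, u a) + (∫ a in b..aU, v a)
        - ∫ a in aL..aU, (u a * Psi ε b a + v a * Psi ε a b)
      = (∫ a in aL..b, u a * (1 - Psi ε b a)) + ∫ a in b..aU, v a * (1 - Psi ε a b) := by
  have hsubL : [[aL, b]] ⊆ [[aL, aU]] := uIcc_subset_uIcc_left (Icc_subset_uIcc hb)
  have hsubR : [[b, aU]] ⊆ [[aL, aU]] := uIcc_subset_uIcc_right (Icc_subset_uIcc hb)
  have huΨ : IntervalIntegrable (fun a => u a * Psi ε b a) volume aL aU :=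
    hu.mul_continuousOn (by fun_prop)
  have hvΨ : IntervalIntegrable (fun a => v a * Psi ε a b) volume aL aU :=
    hv.mul_continuousOn (by fun_prop)
  have h_split : ∫ a in aL..aU, (u a * Psi ε b a + v a * Psi ε a b)
      = (∫ a in aL..b, u a * Psi ε b a) + ∫ a in b..aU, v a * Psi ε a b := by
    rw [← integral_add_adjacent_intervals ((huΨ.add hvΨ).mono_set hsubL)
      ((huΨ.add hvΨ).mono_set hsubR)]
    congr 1 <;> refine integral_congr fun a ha => ?_
    · rw [uIcc_of_le hb.1] at ha
      simp [Psi_of_le ha.2]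
    · rw [uIcc_of_le hb.2] at ha
      simp [Psi_of_le ha.1]
  simp only [mul_one_sub]
  rw [h_split, integral_sub (hu.mono_set hsubL) (huΨ.mono_set hsubL),
    integral_sub (hv.mono_set hsubR) (hvΨ.mono_set hsubR)]
  ring

theorem surrogate_approx_bound_general (aL aU α ε : ℝ) (h : ℝ → ℝ)
    (hε : 0 < ε)
    (hα : α ∈ Icc (0 : ℝ) 1)
    (hmeas : Measurable h)
    (hrange : ∀ a ∈ Icc aL aU, h a ∈ Icc (0 : ℝ) 1)
    (r rε : ℝ → ℝ)
    (hr : ∀ b, r b = (∫ a in aL..b, (1 - α) * h a) + ∫ a in b..aU, α * (1 - h a))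
    (hrε : ∀ b, rε b = ∫ a in aL..aU,
      ((1 - α) * h a * Psi ε b a + α * (1 - h a) * Psi ε a b)) :
    ∀ b ∈ Icc (aL + ε) (aU - ε), |r b - rε b| ≤ ε := by
  rintro b ⟨hb₁, hb₂⟩
  have hb : b ∈ Icc aL aU := ⟨by linarith, by linarith⟩
  have hu : ∀ a ∈ Icc aL aU, (1 - α) * h a ∈ Icc 0 (1 - α) := fun a ha =>
    mul_mem_Icc_of_mem_Icc_zero_one ⟨sub_nonneg.2 hα.2, le_rfl⟩ (hrange a ha)
  have hv : ∀ a ∈ Icc aL aU, α * (1 - h a) ∈ Icc 0 α := fun a ha =>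
    mul_mem_Icc_of_mem_Icc_zero_one ⟨hα.1, le_rfl⟩
      ⟨sub_nonneg.2 (hrange a ha).2, sub_le_self _ (hrange a ha).1⟩
  have hh : IntervalIntegrable h volume aL aU :=
    intervalIntegrable_of_norm_le hmeas.aestronglyMeasurable fun a ha => by
      have ha' := hrange a (Ioc_subset_Icc_self (uIoc_of_le (hb.1.trans hb.2) ▸ ha))
      exact (Real.norm_of_nonneg ha'.1).trans_le ha'.2
  have h_left : ∫ a in aL..b, (1 - α) * h a * (1 - Psi ε b a)
      ∈ Icc 0 ((1 - α) * (b - (b - ε))) :=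
    integral_mem_Icc_of_eq_zero_off (by linarith) (by linarith) le_rfl
      (fun a ha => by rw [Psi_of_add_le hε (by linarith [ha.2]), sub_self, mul_zero])
      (fun a ha => (ha.1.not_ge ha.2).elim)
      (fun a ha => mul_mem_Icc_of_mem_Icc_zero_one
        (hu a ⟨by linarith [ha.1], by linarith [ha.2]⟩) (one_sub_Psi_mem_Icc hε.le _ _))
  have h_right : ∫ a in b..aU, α * (1 - h a) * (1 - Psi ε a b) ∈ Icc 0 (α * (b + ε - b)) :=
    integral_mem_Icc_of_eq_zero_off le_rfl (by linarith) (by linarith)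
      (fun a ha => (ha.1.not_ge ha.2).elim)
      (fun a ha => by rw [Psi_of_add_le hε ha.1.le, sub_self, mul_zero])
      (fun a ha => mul_mem_Icc_of_mem_Icc_zero_one
        (hv a ⟨by linarith [ha.1], by linarith [ha.2]⟩) (one_sub_Psi_mem_Icc hε.le _ _))
  rw [hr, hrε, integral_sub_integral_Psi hb (hh.const_mul _)
    ((intervalIntegrable_const.sub hh).const_mul _), abs_le]
  constructor <;> linarith [h_left.1, h_left.2, h_right.1, h_right.2]

theorem surrogate_approx_bound (aL aU α ε : ℝ) (h : ℝ → ℝ)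
    (hlt : aL < aU) (hε : 0 < ε) (hgap : 2 * ε < aU - aL)
    (hα : α ∈ Icc (0 : ℝ) 1)
    (hmeas : Measurable h)
    (hrange : ∀ a ∈ Icc aL aU, h a ∈ Icc (0 : ℝ) 1)
    (r rε : ℝ → ℝ)
    (hr : ∀ b, r b = (∫ a in aL..b, (1 - α) * h a) + ∫ a in b..aU, α * (1 - h a))
    (hrε : ∀ b, rε b = ∫ a in aL..aU,
      ((1 - α) * h a * Psi ε b a + α * (1 - h a) * Psi ε a b)) :
    ∀ b ∈ Icc (aL + ε) (aU - ε), |r b - rε b| ≤ ε :=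
  surrogate_approx_bound_general aL aU α ε h hε hα hmeas hrange r rε hr hrε
end

section
/- Two-sided surrogate approximation bound (pointwise version): let h: [a_L,a_U] → [0,1] be measurable, α ∈ [0,1], and define r(b,c) = ∫_{[a_L,b]∪[c,a_U]}(1−α)h(a)da + ∫_b^c α(1−h(a))da and r_ε(b,c) = ∫_{a_L}^{a_U}[(1−α)h(a)Ψ_ε^{out}(b,a,c) + α(1−h(a))Ψ_ε^{in}(b,a,c)]da. Then for all b, c with a_L + ε ≤ b ≤ b + 2ε ≤ c ≤ a_U − ε, |r(b,c) − r_ε(b,c)| ≤ 2ε. -/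
open Set intervalIntegral
open MeasureTheory

/-- Trapezoidal inside loss. -/
noncomputable def PsiIn (ε b a c : ℝ) : ℝ :=
  if a ≤ b then 0
  else if a ≤ b + ε then (a - b) / ε
  else if a ≤ c - ε then 1
  else if a ≤ c then (c - a) / ε
  else 0

noncomputable def PsiOut (ε b a c : ℝ) : ℝ := 1 - PsiIn ε b a c


lemma psiIn_mem {ε : ℝ} (hε : 0 < ε) (b a c : ℝ) : PsiIn ε b a c ∈ Icc (0:ℝ) 1 := by
  unfold PsiIn
  split_ifs with h1 h2 h3 h4 <;> rw [Set.mem_Icc] <;> (try push_neg at *)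
  · constructor <;> norm_num
  · constructor
    · apply div_nonneg <;> linarith
    · rw [div_le_one hε]; linarith
  · constructor <;> norm_num
  · constructor
    · apply div_nonneg <;> linarith
    · rw [div_le_one hε]; linarith
  · constructor <;> norm_num

lemma psiIn_meas (ε b c : ℝ) : Measurable (fun a => PsiIn ε b a c) := by
  unfold PsiIn
  refine Measurable.ite (measurableSet_le measurable_id measurable_const) measurable_const ?_
  refine Measurable.ite (measurableSet_le measurable_id measurable_const) (by fun_prop) ?_
  refine Measurable.ite (measurableSet_le measurable_id measurable_const) measurable_const ?_
  refine Measurable.ite (measurableSet_le measurable_id measurable_const) (by fun_prop) ?_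
  exact measurable_const

lemma intInt {g : ℝ → ℝ} (hg : Measurable g) {u v C : ℝ}
    (hC : ∀ x ∈ Set.uIcc u v, |g x| ≤ C) : IntervalIntegrable g volume u v := by
  refine (intervalIntegrable_const (c := C)).mono_fun
    hg.aestronglyMeasurable.restrict ?_
  filter_upwards [ae_restrict_mem measurableSet_uIoc] with x hx
  simpa [Real.norm_eq_abs] using (hC x (uIoc_subset_uIcc hx)).trans (le_abs_self C)

theorem two_sided_surrogate_approx_bound (aL aU α ε : ℝ) (h : ℝ → ℝ)
    (hlt : aL < aU) (hε : 0 < ε) (hα : α ∈ Icc (0 : ℝ) 1)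
    (hmeas : Measurable h)
    (hrange : ∀ a ∈ Icc aL aU, h a ∈ Icc (0 : ℝ) 1)
    (r rε : ℝ → ℝ → ℝ)
    (hr : ∀ b c, r b c =
      (∫ a in aL..b, (1 - α) * h a) + (∫ a in c..aU, (1 - α) * h a) +
      ∫ a in b..c, α * (1 - h a))
    (hrε : ∀ b c, rε b c = ∫ a in aL..aU,
      ((1 - α) * h a * PsiOut ε b a c + α * (1 - h a) * PsiIn ε b a c)) :
    ∀ b c : ℝ, aL + ε ≤ b → b + 2 * ε ≤ c → c ≤ aU - ε →
      |r b c - rε b c| ≤ 2 * ε := by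
  obtain ⟨hα0, hα1⟩ := hα
  intro b c hb hbc hc
  set f : ℝ → ℝ := fun a => (1 - α) * h a * PsiOut ε b a c + α * (1 - h a) * PsiIn ε b a c
    with hf
  set d : ℝ → ℝ := fun a => ((1 - α) * h a - α * (1 - h a)) * PsiOut ε b a c with hd
  have hbc' : b ≤ c := by linarith
  have haLb : aL ≤ b := by linarith
  have hcaU : c ≤ aU := by linarith
  -- pointwise bounds used repeatedly
  have hsub : ∀ x ∈ Icc aL aU, |h x| ≤ 1 := fun x hx => by
    rcases hrange x hx with ⟨h0, h1⟩; rw [abs_le]; constructor <;> linarith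
  have hPsi : ∀ a, PsiIn ε b a c ∈ Icc (0:ℝ) 1 := fun a => psiIn_mem hε b a c
  have hfbd : ∀ x ∈ Icc aL aU, |f x| ≤ 1 := by
    intro x hx
    rcases hrange x hx with ⟨h0, h1⟩
    rcases hPsi x with ⟨p0, p1⟩
    have : PsiOut ε b x c = 1 - PsiIn ε b x c := rfl
    rw [abs_le]
    constructor <;> simp only [hf, this] <;> nlinarith [hPsi x]
  have hdbd : ∀ x ∈ Icc aL aU, |d x| ≤ 1 := by
    intro x hx
    rcases hrange x hx with ⟨h0, h1⟩
    rcases hPsi x with ⟨p0, p1⟩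
    have hPO : PsiOut ε b x c = 1 - PsiIn ε b x c := rfl
    rw [hd, abs_le]
    constructor <;> simp only [hPO] <;> nlinarith
  have hmeasf : Measurable f := by
    have := psiIn_meas ε b c
    simp only [hf, PsiOut]
    fun_prop
  have hmeasd : Measurable d := by
    have := psiIn_meas ε b c
    simp only [hd, PsiOut]
    fun_prop
  -- integrability on subintervals of [aL, aU]
  have subInt : ∀ (g : ℝ → ℝ), Measurable g → (∀ x ∈ Icc aL aU, |g x| ≤ 1) →
      ∀ u v, aL ≤ u → u ≤ v → v ≤ aU → IntervalIntegrable g volume u v := by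
    intro g hg hgb u v hu huv hv
    refine intInt hg (C := 1) ?_
    intro x hx
    rw [uIcc_of_le huv] at hx
    exact hgb x ⟨le_trans hu hx.1, le_trans hx.2 hv⟩
  -- split rε
  have hfi1 : IntervalIntegrable f volume aL b := subInt f hmeasf hfbd aL b le_rfl haLb (by linarith)
  have hfi2 : IntervalIntegrable f volume b c := subInt f hmeasf hfbd b c haLb hbc' hcaU
  have hfi3 : IntervalIntegrable f volume c aU := subInt f hmeasf hfbd c aU (by linarith) hcaU le_rfl
  have hdi1 : IntervalIntegrable d volume b (b + ε) := subInt d hmeasd hdbd b (b + ε) haLb (by linarith) (by linarith)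
  have hdi2 : IntervalIntegrable d volume (b + ε) (c - ε) := subInt d hmeasd hdbd (b + ε) (c - ε) (by linarith) (by linarith) (by linarith)
  have hdi3 : IntervalIntegrable d volume (c - ε) c := subInt d hmeasd hdbd (c - ε) c (by linarith) (by linarith) hcaU
  have hgini : IntervalIntegrable (fun a => α * (1 - h a)) volume b c := by
    refine subInt _ (by fun_prop) ?_ b c haLb hbc' hcaU
    intro x hx
    rcases hrange x hx with ⟨h0, h1⟩
    rw [abs_le]; constructor <;> nlinarith
  -- split rε into three pieces
  have hsplit : rε b c = (∫ a in aL..b, f a) + (∫ a in b..c, f a) + (∫ a in c..aU, f a) := by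
    rw [hrε b c]
    rw [← intervalIntegral.integral_add_adjacent_intervals (hfi1.trans hfi2) hfi3,
        ← intervalIntegral.integral_add_adjacent_intervals hfi1 hfi2]
  -- f agrees with (1-α) h outside [b, c]
  have hout0 : ∀ x, x ≤ b ∨ c ≤ x → PsiIn ε b x c = 0 := by
    intro x hx
    unfold PsiIn
    rcases hx with hx | hx
    · rw [if_pos hx]
    · have h1 : ¬ x ≤ b := by push_neg; linarith
      have h2 : ¬ x ≤ b + ε := by push_neg; linarith
      have h3 : ¬ x ≤ c - ε := by push_neg; linarith
      rw [if_neg h1, if_neg h2, if_neg h3]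
      rcases le_or_gt x c with hxc | hxc
      · have : x = c := le_antisymm hxc hx
        rw [if_pos hxc, this]; ring
      · rw [if_neg (not_le.mpr hxc)]
  have heq1 : (∫ a in aL..b, f a) = ∫ a in aL..b, (1 - α) * h a := by
    apply intervalIntegral.integral_congr
    intro x hx
    rw [uIcc_of_le haLb] at hx
    have h0 : PsiIn ε b x c = 0 := hout0 x (Or.inl hx.2)
    simp only [hf, PsiOut, h0]
    ring
  have heq3 : (∫ a in c..aU, f a) = ∫ a in c..aU, (1 - α) * h a := by
    apply intervalIntegral.integral_congr
    intro x hx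
    rw [uIcc_of_le hcaU] at hx
    have h0 : PsiIn ε b x c = 0 := hout0 x (Or.inr hx.1)
    simp only [hf, PsiOut, h0]
    ring
  -- middle: f - g_in = d
  have heq2 : (∫ a in b..c, f a) - (∫ a in b..c, α * (1 - h a)) = ∫ a in b..c, d a := by
    rw [← intervalIntegral.integral_sub hfi2 hgini]
    apply intervalIntegral.integral_congr
    intro x _
    simp only [hf, hd, PsiOut]
    ring
  -- middle piece of d vanishes
  have hmid : (∫ a in (b+ε)..(c-ε), d a) = 0 := by
    rw [← intervalIntegral.integral_zero (a := b + ε) (b := c - ε) (μ := volume)]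
    apply intervalIntegral.integral_congr
    intro x hx
    rw [uIcc_of_le (by linarith : b + ε ≤ c - ε)] at hx
    have hPsi1 : PsiIn ε b x c = 1 := by
      unfold PsiIn
      have h1 : ¬ x ≤ b := by push_neg; linarith [hx.1]
      rw [if_neg h1]
      rcases le_or_gt x (b + ε) with h2 | h2
      · have : x = b + ε := le_antisymm h2 hx.1
        rw [if_pos h2, this]
        field_simp
        ring
      · rw [if_neg (not_le.mpr h2), if_pos hx.2]
    simp only [hd, PsiOut, hPsi1]
    ring
  have hdsplit : (∫ a in b..c, d a) = (∫ a in b..(b+ε), d a) + (∫ a in (c-ε)..c, d a) := by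
    rw [← intervalIntegral.integral_add_adjacent_intervals (hdi1.trans hdi2) hdi3,
        ← intervalIntegral.integral_add_adjacent_intervals hdi1 hdi2, hmid]
    ring
  -- bound the two edge integrals
  have hedge : ∀ u v, aL ≤ u → u ≤ v → v ≤ aU → v - u = ε → |∫ a in u..v, d a| ≤ ε := by
    intro u v hu huv hv huv'
    have := intervalIntegral.norm_integral_le_of_norm_le_const (C := 1)
      (f := d) (a := u) (b := v) ?_
    · rw [Real.norm_eq_abs] at this
      calc |∫ a in u..v, d a| ≤ 1 * |v - u| := this
        _ = ε := by rw [huv', abs_of_pos hε]; ring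
    · intro x hx
      rw [uIoc_of_le huv] at hx
      rw [Real.norm_eq_abs]
      exact hdbd x ⟨le_trans hu (le_of_lt hx.1), le_trans hx.2 hv⟩
  -- put it together
  have key : r b c - rε b c = -((∫ a in b..(b+ε), d a) + (∫ a in (c-ε)..c, d a)) := by
    rw [hr b c, hsplit, heq1, heq3, ← hdsplit, ← heq2]
    ring
  rw [key, abs_neg]
  calc |(∫ a in b..(b+ε), d a) + (∫ a in (c-ε)..c, d a)|
      ≤ |∫ a in b..(b+ε), d a| + |∫ a in (c-ε)..c, d a| := abs_add_le _ _
    _ ≤ ε + ε := add_le_add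
        (hedge b (b+ε) haLb (by linarith) (by linarith) (by ring))
        (hedge (c-ε) c (by linarith) (by linarith) hcaU (by ring))
    _ = 2 * ε := by ring
end

section
/- Fisher consistency for the two-sided pointwise PDI risk: under the single-crossing structure (h continuous, h(a_L) ≤ α, h(a_U) ≤ α, exactly two solutions a₁ < a₂ of h = α, and h ≥ α on [a₁,a₂], h ≤ α off it), the pair (a₁, a₂) is a global minimizer of r(b,c) = (1−α)(∫_{a_L}^{b} h + ∫_c^{a_U} h) + α∫_b^c (1−h) over {(b,c): a_L ≤ b ≤ c ≤ a_U}, and any other minimizer (b,c) satisfies ∫_{a₁}^{b}(h−α) = 0 and ∫_{c}^{a₂}(h−α) = 0. -/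
/-!
Both components of the risk integrate `h` over all of `[a_L, a_U]` except the band `[b, c]`,
so `r(b, c) = (1 - α) ∫_{a_L}^{a_U} h - ∫_b^c (h - α)`: minimising `r` means maximising
`∫_b^c (h - α)`. Since `h - α` is nonnegative exactly on `[a₁, a₂]`, moving `b` towards `a₁`
and `c` towards `a₂` can only increase that integral: the deficit of `[b, c]` against
`[a₁, a₂]` is `∫_{a₁}^b (h - α) + ∫_c^{a₂} (h - α)`, a sum of two nonnegative terms unless
`[b, c]` misses `(a₁, a₂)`. In that case `∫_b^c (h - α) ≤ 0 < ∫_{a₁}^{a₂} (h - α)`, the strict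
inequality because `h > α` on `(a₁, a₂)`, so `[b, c]` is not optimal.
-/

open Set intervalIntegral
open MeasureTheory (IntegrableOn volume)

noncomputable def twoSidedRisk (α l u : ℝ) (h : ℝ → ℝ) (b c : ℝ) : ℝ :=
  (1 - α) * ((∫ a in l..b, h a) + ∫ a in c..u, h a) + α * ∫ a in b..c, (1 - h a)

section

variable {g : ℝ → ℝ} {l u a₁ a₂ b c : ℝ}

theorem MeasureTheory.IntegrableOn.intervalIntegrable_of_mem_Icc (hg : IntegrableOn g (Icc l u))
    (hb : b ∈ Icc l u) (hc : c ∈ Icc l u) : IntervalIntegrable g volume b c :=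
  (hg.mono_set (uIcc_subset_Icc hb hc)).intervalIntegrable

theorem twoSidedRisk_eq (α : ℝ) (hg : IntegrableOn g (Icc l u))
    (hb : b ∈ Icc l u) (hc : c ∈ Icc l u) :
    twoSidedRisk α l u g b c = (1 - α) * (∫ a in l..u, g a) - ∫ a in b..c, (g a - α) := by
  have hl : l ∈ Icc l u := left_mem_Icc.2 (hb.1.trans hb.2)
  have hu : u ∈ Icc l u := right_mem_Icc.2 (hb.1.trans hb.2)
  have hbc := hg.intervalIntegrable_of_mem_Icc hb hc
  have hcu := hg.intervalIntegrable_of_mem_Icc hc hu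
  rw [twoSidedRisk, integral_sub intervalIntegrable_const hbc,
    integral_sub hbc intervalIntegrable_const,
    ← integral_add_adjacent_intervals (hg.intervalIntegrable_of_mem_Icc hl hb) (hbc.trans hcu),
    ← integral_add_adjacent_intervals hbc hcu]
  simp only [integral_const, smul_eq_mul]
  ring

theorem integral_nonneg_of_nonneg_of_nonpos (hpos : ∀ x ∈ Icc b c, 0 ≤ g x)
    (hneg : ∀ x ∈ Icc c b, g x ≤ 0) : 0 ≤ ∫ x in b..c, g x := by
  rcases le_total b c with hbc | hcb
  · exact integral_nonneg hbc hpos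
  · rw [integral_symm, ← intervalIntegral.integral_neg]
    exact integral_nonneg hcb fun x hx ↦ neg_nonneg.2 (hneg x hx)

theorem integral_sub_integral_eq_add_integral (hg : IntegrableOn g (Icc l u))
    (ha₁ : a₁ ∈ Icc l u) (ha₂ : a₂ ∈ Icc l u) (hb : b ∈ Icc l u) (hc : c ∈ Icc l u) :
    (∫ x in a₁..a₂, g x) - ∫ x in b..c, g x = (∫ x in a₁..b, g x) + ∫ x in c..a₂, g x := by
  rw [integral_interval_sub_interval_comm (hg.intervalIntegrable_of_mem_Icc ha₁ ha₂)
    (hg.intervalIntegrable_of_mem_Icc hb hc) (hg.intervalIntegrable_of_mem_Icc ha₁ hb),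
    integral_symm c a₂, sub_neg_eq_add]

variable (hpos : ∀ x ∈ Icc a₁ a₂, 0 ≤ g x) (hneg : ∀ x ∈ Icc l a₁ ∪ Icc a₂ u, g x ≤ 0)
include hpos hneg

theorem integral_nonneg_and_nonneg_or_integral_nonpos_of_sign_pattern
    (hb : l ≤ b) (hbc : b ≤ c) (hc : c ≤ u) :
    (0 ≤ ∫ x in a₁..b, g x ∧ 0 ≤ ∫ x in c..a₂, g x) ∨ ∫ x in b..c, g x ≤ 0 := by
  by_cases hout : c < a₁ ∨ a₂ < b
  · right
    have : 0 ≤ ∫ x in b..c, -g x := integral_nonneg hbc fun x hx ↦ neg_nonneg.2 <| hneg x <| by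
      rcases hout with hca | hab
      · exact .inl ⟨hb.trans hx.1, hx.2.trans hca.le⟩
      · exact .inr ⟨hab.le.trans hx.1, hx.2.trans hc⟩
    rwa [intervalIntegral.integral_neg, neg_nonneg] at this
  · simp only [not_or, not_lt] at hout
    obtain ⟨hac, hba⟩ := hout
    exact .inl ⟨integral_nonneg_of_nonneg_of_nonpos (fun x hx ↦ hpos x ⟨hx.1, hx.2.trans hba⟩)
        (fun x hx ↦ hneg x (.inl ⟨hb.trans hx.1, hx.2⟩)),
      integral_nonneg_of_nonneg_of_nonpos (fun x hx ↦ hpos x ⟨hac.trans hx.1, hx.2⟩)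
        (fun x hx ↦ hneg x (.inr ⟨hx.1, hx.2.trans hc⟩))⟩

theorem integral_le_integral_of_sign_pattern (hg : IntegrableOn g (Icc l u))
    (ha₁ : a₁ ∈ Icc l u) (ha₂ : a₂ ∈ Icc l u) (hb : l ≤ b) (hbc : b ≤ c) (hc : c ≤ u) :
    ∫ x in b..c, g x ≤ ∫ x in a₁..a₂, g x := by
  have hdeficit := integral_sub_integral_eq_add_integral hg ha₁ ha₂ ⟨hb, hbc.trans hc⟩
    ⟨hb.trans hbc, hc⟩
  have hM : 0 ≤ ∫ x in a₁..a₂, g x := integral_nonneg_of_nonneg_of_nonpos hpos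
    fun x hx ↦ hneg x (.inl ⟨ha₂.1.trans hx.1, hx.2⟩)
  rcases integral_nonneg_and_nonneg_or_integral_nonpos_of_sign_pattern hpos hneg hb hbc hc with
    ⟨hleft, hright⟩ | hnonpos <;> linarith

theorem integral_eq_zero_and_eq_zero_of_integral_eq (hg : IntegrableOn g (Icc l u))
    (ha₁ : a₁ ∈ Icc l u) (ha₂ : a₂ ∈ Icc l u) (hM : 0 < ∫ x in a₁..a₂, g x)
    (hb : l ≤ b) (hbc : b ≤ c) (hc : c ≤ u) (heq : ∫ x in b..c, g x = ∫ x in a₁..a₂, g x) :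
    ∫ x in a₁..b, g x = 0 ∧ ∫ x in c..a₂, g x = 0 := by
  have hdeficit := integral_sub_integral_eq_add_integral hg ha₁ ha₂ ⟨hb, hbc.trans hc⟩
    ⟨hb.trans hbc, hc⟩
  rcases integral_nonneg_and_nonneg_or_integral_nonpos_of_sign_pattern hpos hneg hb hbc hc with
    ⟨hleft, hright⟩ | hnonpos
  · constructor <;> linarith
  · linarith

end

theorem two_sided_fisher_consistency_general (aL aU α : ℝ) (h : ℝ → ℝ)
    (hcont : ContinuousOn h (Icc aL aU))
    (a₁ a₂ : ℝ) (h₁ : a₁ ∈ Icc aL aU) (h₂ : a₂ ∈ Icc aL aU) (h12 : a₁ < a₂)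
    (huniq : ∀ a ∈ Icc aL aU, h a = α → a = a₁ ∨ a = a₂)
    (hin : ∀ a ∈ Icc a₁ a₂, α ≤ h a)
    (hout : ∀ a ∈ Icc aL a₁ ∪ Icc a₂ aU, h a ≤ α)
    (r : ℝ → ℝ → ℝ)
    (hr : ∀ b c, r b c =
      (1 - α) * ((∫ a in aL..b, h a) + ∫ a in c..aU, h a) +
      α * ∫ a in b..c, (1 - h a)) :
    (∀ b c : ℝ, aL ≤ b → b ≤ c → c ≤ aU → r a₁ a₂ ≤ r b c) ∧
    (∀ b c : ℝ, aL ≤ b → b ≤ c → c ≤ aU → r b c = r a₁ a₂ →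
      (∫ a in a₁..b, (h a - α)) = 0 ∧ (∫ a in c..a₂, (h a - α)) = 0) := by
  have hg : IntegrableOn (fun a ↦ h a - α) (Icc aL aU) :=
    (hcont.sub continuousOn_const).integrableOn_Icc
  have hrisk : ∀ b c, aL ≤ b → b ≤ c → c ≤ aU →
      r b c = (1 - α) * (∫ a in aL..aU, h a) - ∫ a in b..c, (h a - α) := fun b c hb hbc hc ↦
    (hr b c).trans <| twoSidedRisk_eq α hcont.integrableOn_Icc ⟨hb, hbc.trans hc⟩ ⟨hb.trans hbc, hc⟩
  have hpos : ∀ x ∈ Icc a₁ a₂, 0 ≤ h x - α := fun x hx ↦ sub_nonneg.2 (hin x hx)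
  have hneg : ∀ x ∈ Icc aL a₁ ∪ Icc a₂ aU, h x - α ≤ 0 := fun x hx ↦ sub_nonpos.2 (hout x hx)
  have hM : 0 < ∫ a in a₁..a₂, (h a - α) := by
    refine intervalIntegral_pos_of_pos_on (hg.intervalIntegrable_of_mem_Icc h₁ h₂)
      (fun x hx ↦ sub_pos.2 <| (hin x (Ioo_subset_Icc_self hx)).lt_of_ne fun hαx ↦ ?_) h12
    rcases huniq x ⟨h₁.1.trans hx.1.le, hx.2.le.trans h₂.2⟩ hαx.symm with rfl | rfl
    exacts [hx.1.ne rfl, hx.2.ne rfl]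
  rw [hrisk a₁ a₂ h₁.1 h12.le h₂.2]
  refine ⟨fun b c hb hbc hc ↦ ?_, fun b c hb hbc hc hmin ↦ ?_⟩
  · rw [hrisk b c hb hbc hc]
    exact sub_le_sub_left (integral_le_integral_of_sign_pattern hpos hneg hg h₁ h₂ hb hbc hc) _
  · rw [hrisk b c hb hbc hc, sub_right_inj] at hmin
    exact integral_eq_zero_and_eq_zero_of_integral_eq hpos hneg hg h₁ h₂ hM hb hbc hc hmin

theorem two_sided_fisher_consistency (aL aU α : ℝ) (h : ℝ → ℝ) (hlt : aL < aU)
    (hα : α ∈ Ioo (0 : ℝ) 1)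
    (hcont : ContinuousOn h (Icc aL aU))
    (hrange : ∀ a ∈ Icc aL aU, h a ∈ Icc (0 : ℝ) 1)
    (hL : h aL ≤ α) (hU : h aU ≤ α)
    (a₁ a₂ : ℝ) (h₁ : a₁ ∈ Icc aL aU) (h₂ : a₂ ∈ Icc aL aU) (h12 : a₁ < a₂)
    (heq₁ : h a₁ = α) (heq₂ : h a₂ = α)
    (huniq : ∀ a ∈ Icc aL aU, h a = α → a = a₁ ∨ a = a₂)
    (hin : ∀ a ∈ Icc a₁ a₂, α ≤ h a)
    (hout : ∀ a ∈ Icc aL a₁ ∪ Icc a₂ aU, h a ≤ α)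
    (r : ℝ → ℝ → ℝ)
    (hr : ∀ b c, r b c =
      (1 - α) * ((∫ a in aL..b, h a) + ∫ a in c..aU, h a) +
      α * ∫ a in b..c, (1 - h a)) :
    (∀ b c : ℝ, aL ≤ b → b ≤ c → c ≤ aU → r a₁ a₂ ≤ r b c) ∧
    (∀ b c : ℝ, aL ≤ b → b ≤ c → c ≤ aU → r b c = r a₁ a₂ →
      (∫ a in a₁..b, (h a - α)) = 0 ∧ (∫ a in c..a₂, (h a - α)) = 0) :=
  two_sided_fisher_consistency_general aL aU α h hcont a₁ a₂ h₁ h₂ h12 huniq hin hout r hr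
end
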